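/- Let ρ ∈ (0,1), let π be a bounded probability density on [0,1], and let c ≥ 0. Suppose g : [0,1]² → ℝ is a bounded measurable function satisfying, for all x, y ∈ [0,1], g(x,y) = ρ·π(y)·∫*_{u=x}^{y} [g(x,u) + g(y,u)] du + c·π(y)·∫*_{u=x}^{y} [ρ·π(u) + 1−ρ] du. Then for all x, y ∈ [0,1]: | g(x,y) − (c/(1−ρ))·π(y)·∫*_{u=x}^{y} π(u) du | ≤ (1+ρ)·π(y)·c. -/

import Mathlib

/-!
Write `F(x,y) = ∫*_{u=x}^{y} π(u) du` for the `π`-mass of the arc from `x` to `y`, and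
`Λ(x,y) = ∫*_{u=x}^{y} 1 du` for its length; both lie in `[0,1]`. A Fubini argument on triangles
gives `∫*_{u=x}^{y} π(u) (F(x,u) + F(y,u)) du = F(x,y)`. Hence the deviation
`e(x,y) = g(x,y) - (c/(1-ρ)) π(y) F(x,y)` satisfies
`e(x,y) = π(y) (ρ ∫*_{u=x}^{y} [e(x,u) + e(y,u)] du + c(1-ρ)(Λ - F)(x,y))`,
and a bound `|e(x,u)| ≤ π(u) (p F(x,u) + c(1-ρ))` improves to the same bound with slope
`ρ p + 2ρc(1-ρ)`. The admissible slopes form a closed set stable under this contraction, so it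
contains its fixed point `2ρc`; as `F ≤ 1`, this gives `|e(x,y)| ≤ (1+ρ) π(y) c`.
-/

open MeasureTheory

/-- Circular integral: `∫*_{u=a}^{b} h(u) du` on the circle `[0,1)`.
It equals `∫_a^b h` if `a ≤ b` and `∫_a^1 h + ∫_0^b h` if `a > b`. -/
noncomputable def cint (a b : ℝ) (h : ℝ → ℝ) : ℝ :=
  if a ≤ b then ∫ u in a..b, h u
  else (∫ u in a..(1 : ℝ), h u) + ∫ u in (0 : ℝ)..b, h u

open Set Filter Topology

local notation "𝕀" => Icc (0 : ℝ) 1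

lemma MeasureTheory.IntegrableOn.intervalIntegrable_of_mem_Icc {f : ℝ → ℝ} {s t a b : ℝ}
    (hf : IntegrableOn f (Icc s t)) (ha : a ∈ Icc s t) (hb : b ∈ Icc s t) :
    IntervalIntegrable f volume a b :=
  (hf.mono_set (uIcc_subset_Icc ha hb)).intervalIntegrable

lemma integrableOn_Icc_of_abs_le {f : ℝ → ℝ} {s t M : ℝ} (hf : Measurable f)
    (hM : ∀ u ∈ Icc s t, |f u| ≤ M) : IntegrableOn f (Icc s t) :=
  Measure.integrableOn_of_bounded measure_Icc_lt_top.ne hf.aestronglyMeasurable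
    (ae_restrict_of_forall_mem measurableSet_Icc hM)

section CircularIntegral

variable {f g : ℝ → ℝ} {a b : ℝ}

lemma cint_of_le (hab : a ≤ b) : cint a b f = ∫ u in a..b, f u := if_pos hab

lemma cint_of_lt (hba : b < a) :
    cint a b f = (∫ u in a..1, f u) + ∫ u in 0..b, f u := if_neg hba.not_ge

lemma cint_congr (ha : a ∈ 𝕀) (hb : b ∈ 𝕀) (h : EqOn f g 𝕀) : cint a b f = cint a b g := by
  have key {s t : ℝ} (hs : s ∈ 𝕀) (ht : t ∈ 𝕀) : ∫ u in s..t, f u = ∫ u in s..t, g u :=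
    intervalIntegral.integral_congr (h.mono (uIcc_subset_Icc hs ht))
  unfold cint
  split_ifs
  · exact key ha hb
  · rw [key ha unitInterval.one_mem, key unitInterval.zero_mem hb]

lemma cint_add (ha : a ∈ 𝕀) (hb : b ∈ 𝕀) (hf : IntegrableOn f 𝕀) (hg : IntegrableOn g 𝕀) :
    cint a b (fun u => f u + g u) = cint a b f + cint a b g := by
  have key {s t : ℝ} (hs : s ∈ 𝕀) (ht : t ∈ 𝕀) :
      ∫ u in s..t, f u + g u = (∫ u in s..t, f u) + ∫ u in s..t, g u :=
    intervalIntegral.integral_add (hf.intervalIntegrable_of_mem_Icc hs ht)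
      (hg.intervalIntegrable_of_mem_Icc hs ht)
  unfold cint
  split_ifs
  · exact key ha hb
  · rw [key ha unitInterval.one_mem, key unitInterval.zero_mem hb]
    ring

lemma cint_const_mul (r : ℝ) : cint a b (fun u => r * f u) = r * cint a b f := by
  unfold cint
  split_ifs <;> simp only [intervalIntegral.integral_const_mul, mul_add]

lemma cint_mono (ha : a ∈ 𝕀) (hb : b ∈ 𝕀) (hf : IntegrableOn f 𝕀) (hg : IntegrableOn g 𝕀)
    (hfg : ∀ u ∈ 𝕀, f u ≤ g u) : cint a b f ≤ cint a b g := by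
  have key {s t : ℝ} (hs : s ∈ 𝕀) (ht : t ∈ 𝕀) (hst : s ≤ t) :
      ∫ u in s..t, f u ≤ ∫ u in s..t, g u :=
    intervalIntegral.integral_mono_on hst (hf.intervalIntegrable_of_mem_Icc hs ht)
      (hg.intervalIntegrable_of_mem_Icc hs ht) fun u hu => hfg u (Icc_subset_Icc hs.1 ht.2 hu)
  unfold cint
  split_ifs with hab
  · exact key ha hb hab
  · exact add_le_add (key ha unitInterval.one_mem ha.2) (key unitInterval.zero_mem hb hb.1)

lemma abs_cint_le (ha : a ∈ 𝕀) (hb : b ∈ 𝕀) (hf : IntegrableOn f 𝕀) (hg : IntegrableOn g 𝕀)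
    (hfg : ∀ u ∈ 𝕀, |f u| ≤ g u) : |cint a b f| ≤ cint a b g := by
  refine abs_le.2 ⟨?_, cint_mono ha hb hf hg fun u hu => (le_abs_self _).trans (hfg u hu)⟩
  have := cint_mono ha hb (hg.const_mul (-1)) hf fun u hu => by
    linarith [neg_abs_le (f u), hfg u hu]
  rw [cint_const_mul] at this
  linarith

lemma cint_mem_Icc (ha : a ∈ 𝕀) (hb : b ∈ 𝕀) (hf : IntegrableOn f 𝕀)
    (hf_nonneg : ∀ u ∈ 𝕀, 0 ≤ f u) (hf_one : ∫ u in 0..1, f u = 1) : cint a b f ∈ 𝕀 := by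
  have hadd {r s t : ℝ} (hr : r ∈ 𝕀) (hs : s ∈ 𝕀) (ht : t ∈ 𝕀) :
      (∫ u in r..s, f u) + ∫ u in s..t, f u = ∫ u in r..t, f u :=
    intervalIntegral.integral_add_adjacent_intervals (hf.intervalIntegrable_of_mem_Icc hr hs)
      (hf.intervalIntegrable_of_mem_Icc hs ht)
  have hpos {s t : ℝ} (hs : s ∈ 𝕀) (ht : t ∈ 𝕀) (hst : s ≤ t) : 0 ≤ ∫ u in s..t, f u :=
    intervalIntegral.integral_nonneg hst fun u hu => hf_nonneg u (Icc_subset_Icc hs.1 ht.2 hu)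
  rcases le_or_gt a b with hab | hba
  · rw [cint_of_le hab]
    have := hadd unitInterval.zero_mem ha hb
    have := hadd unitInterval.zero_mem hb unitInterval.one_mem
    have := hpos unitInterval.zero_mem ha ha.1
    have := hpos hb unitInterval.one_mem hb.2
    constructor <;> linarith [hpos ha hb hab]
  · rw [cint_of_lt hba]
    have := hadd unitInterval.zero_mem hb ha
    have := hadd unitInterval.zero_mem ha unitInterval.one_mem
    have := hpos ha unitInterval.one_mem ha.2
    have := hpos unitInterval.zero_mem hb hb.1
    constructor <;> linarith [hpos hb ha hba.le]

lemma cint_one_mem_Icc (ha : a ∈ 𝕀) (hb : b ∈ 𝕀) : cint a b (fun _ => 1) ∈ 𝕀 :=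
  cint_mem_Icc ha hb (integrableOn_const measure_Icc_lt_top.ne) (fun _ _ => zero_le_one) (by simp)

lemma abs_cint_le_of_abs_le {M : ℝ} (ha : a ∈ 𝕀) (hb : b ∈ 𝕀) (hf : IntegrableOn f 𝕀)
    (hM : ∀ u ∈ 𝕀, |f u| ≤ M) : |cint a b f| ≤ M := by
  have hM₀ : 0 ≤ M := (abs_nonneg _).trans (hM a ha)
  calc |cint a b f| ≤ cint a b (fun _ => M * 1) :=
        abs_cint_le ha hb hf (integrableOn_const measure_Icc_lt_top.ne) fun u hu => by
          simpa using hM u hu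
    _ ≤ M := by
        rw [cint_const_mul]
        exact mul_le_of_le_one_right hM₀ (cint_one_mem_Icc ha hb).2

end CircularIntegral

lemma intervalIntegrable_mul_primitive {f : ℝ → ℝ} {a b : ℝ} (hab : a ≤ b)
    (hf : IntegrableOn f (Icc a b)) :
    IntervalIntegrable (fun u => f u * ∫ t in a..u, f t) volume a b :=
  (hf.intervalIntegrable_of_mem_Icc (left_mem_Icc.2 hab) (right_mem_Icc.2 hab)).mul_continuousOn
    (intervalIntegral.continuousOn_primitive_interval
      (hf.mono_set (uIcc_subset_Icc (left_mem_Icc.2 hab) (right_mem_Icc.2 hab))))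

/-- Both sides are iterated integrals of `f u * f t` over the triangle `a < t ≤ u ≤ b`. -/
lemma integral_mul_primitive_eq_integral_mul_sub_primitive {f : ℝ → ℝ} {a b : ℝ} (hab : a ≤ b)
    (hf : IntegrableOn f (Icc a b)) :
    ∫ u in a..b, f u * ∫ t in a..u, f t
      = ∫ t in a..b, f t * ((∫ u in a..b, f u) - ∫ u in a..t, f u) := by
  set μ := volume.restrict (Ioc a b)
  have hfμ : Integrable f μ := hf.mono_set Ioc_subset_Icc_self
  set φ : ℝ → ℝ → ℝ := fun u t => (Iic u).indicator (fun t => f u * f t) t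
  have hφ : Integrable (Function.uncurry φ) (μ.prod μ) := by
    have : Function.uncurry φ = {p : ℝ × ℝ | p.2 ≤ p.1}.indicator fun p => f p.1 * f p.2 := by
      ext ⟨u, t⟩; simp [φ, indicator_apply]
    rw [this]
    exact (hfμ.mul_prod hfμ).indicator (measurableSet_le measurable_snd measurable_fst)
  have inner_left {u : ℝ} (hu : u ∈ Ioc a b) : ∫ t, φ u t ∂μ = f u * ∫ t in a..u, f t := by
    have hset : Iic u ∩ Ioc a b = Ioc a u := by
      ext t; simp only [mem_inter_iff, mem_Iic, mem_Ioc]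
      exact ⟨fun h => ⟨h.2.1, h.1⟩, fun h => ⟨h.2, h.1, h.2.trans hu.2⟩⟩
    rw [integral_indicator measurableSet_Iic, Measure.restrict_restrict measurableSet_Iic, hset,
      integral_const_mul, ← intervalIntegral.integral_of_le hu.1.le]
  have inner_right {t : ℝ} (ht : t ∈ Ioc a b) :
      ∫ u, φ u t ∂μ = f t * ((∫ u in a..b, f u) - ∫ u in a..t, f u) := by
    have hφt : (fun u => φ u t) = (Ici t).indicator fun u => f t * f u := by
      ext u; simp [φ, indicator_apply, mul_comm]
    have hset : Ici t ∩ Ioc a b = Icc t b := by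
      ext u; simp only [mem_inter_iff, mem_Ici, mem_Ioc, mem_Icc]
      exact ⟨fun h => ⟨h.1, h.2.2⟩, fun h => ⟨h.1, ht.1.trans_le h.1, h.2⟩⟩
    rw [hφt, integral_indicator measurableSet_Ici, Measure.restrict_restrict measurableSet_Ici,
      hset, integral_const_mul, integral_Icc_eq_integral_Ioc,
      ← intervalIntegral.integral_of_le ht.2, intervalIntegral.integral_interval_sub_left
        (hf.intervalIntegrable_of_mem_Icc (left_mem_Icc.2 hab) (right_mem_Icc.2 hab))
        (hf.intervalIntegrable_of_mem_Icc (left_mem_Icc.2 hab) (Ioc_subset_Icc_self ht))]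
  rw [intervalIntegral.integral_of_le hab, intervalIntegral.integral_of_le hab,
    ← setIntegral_congr_fun measurableSet_Ioc fun u hu => inner_left hu,
    ← setIntegral_congr_fun measurableSet_Ioc fun t ht => inner_right ht]
  exact integral_integral_swap hφ

lemma integral_mul_primitive {f : ℝ → ℝ} {a b : ℝ} (hab : a ≤ b) (hf : IntegrableOn f (Icc a b)) :
    ∫ u in a..b, f u * ∫ t in a..u, f t = (∫ u in a..b, f u) ^ 2 / 2 := by
  have hswap := integral_mul_primitive_eq_integral_mul_sub_primitive hab hf
  simp only [mul_sub] at hswap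
  rw [intervalIntegral.integral_sub ((hf.intervalIntegrable_of_mem_Icc (left_mem_Icc.2 hab)
    (right_mem_Icc.2 hab)).mul_const _) (intervalIntegrable_mul_primitive hab hf),
    intervalIntegral.integral_mul_const] at hswap
  linarith

lemma integral_mul_eq_of_eq_const_add_primitive {f F : ℝ → ℝ} {a b : ℝ} (C : ℝ) (hab : a ≤ b)
    (hf : IntegrableOn f (Icc a b)) (hF : ∀ u ∈ Ioo a b, F u = C + ∫ t in a..u, f t) :
    ∫ u in a..b, f u * F u = C * (∫ u in a..b, f u) + (∫ u in a..b, f u) ^ 2 / 2 := by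
  have hcongr : ∫ u in a..b, f u * F u = ∫ u in a..b, C * f u + f u * ∫ t in a..u, f t := by
    refine intervalIntegral.integral_congr_ae ?_
    filter_upwards [(Ioo_ae_eq_Ioc (a := a) (b := b) (μ := volume)).mem_iff] with u hu huab
    rw [uIoc_of_le hab, ← hu] at huab
    rw [hF u huab]
    ring
  rw [hcongr, intervalIntegral.integral_add ((hf.intervalIntegrable_of_mem_Icc (left_mem_Icc.2 hab)
      (right_mem_Icc.2 hab)).const_mul C) (intervalIntegrable_mul_primitive hab hf),
    intervalIntegral.integral_const_mul, integral_mul_primitive hab hf]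

section CintPrimitive

variable {f : ℝ → ℝ} {x y : ℝ}

lemma integrable_mul_cint (hf : Integrable f) (x : ℝ) : Integrable fun u => f u * cint x u f := by
  have hprim (s : ℝ) : Continuous fun u => ∫ t in s..u, f t :=
    intervalIntegral.continuous_primitive (fun _ _ => hf.intervalIntegrable) s
  have hmeas : Measurable fun u => cint x u f :=
    Measurable.ite (measurableSet_le measurable_const measurable_id) (hprim x).measurable
      (continuous_const.add (hprim 0)).measurable
  have hbound (s t : ℝ) : |∫ u in s..t, f u| ≤ ∫ u, ‖f u‖ :=
    intervalIntegral.norm_integral_le_integral_norm_uIoc.trans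
      (setIntegral_le_integral hf.norm (ae_of_all _ fun _ => norm_nonneg _))
  have hbdd (u : ℝ) : ‖cint x u f‖ ≤ 2 * ∫ u, ‖f u‖ := by
    have : 0 ≤ ∫ u, ‖f u‖ := integral_nonneg fun u => norm_nonneg (f u)
    rw [Real.norm_eq_abs]
    unfold cint
    split_ifs
    · linarith [hbound x u]
    · exact (abs_add_le _ _).trans (by linarith [hbound x 1, hbound 0 u])
  simpa only [mul_comm] using hf.bdd_mul hmeas.aestronglyMeasurable (ae_of_all _ hbdd)

lemma integrable_mul_cint_add_cint (hf : Integrable f) (x y : ℝ) :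
    Integrable fun u => f u * (cint x u f + cint y u f) := by
  simpa only [mul_add, Pi.add_def] using (integrable_mul_cint hf x).add (integrable_mul_cint hf y)

lemma cint_mul_cint_left (hf : Integrable f) (hx : x ∈ 𝕀) (hy : y ∈ 𝕀) :
    cint x y (fun u => f u * cint x u f) = cint x y f ^ 2 / 2 := by
  rcases le_or_gt x y with hxy | hyx
  · rw [cint_of_le hxy, cint_of_le hxy,
      integral_mul_eq_of_eq_const_add_primitive 0 hxy hf.integrableOn
        fun u hu => by rw [cint_of_le hu.1.le, zero_add]]
    ring
  · rw [cint_of_lt hyx, cint_of_lt hyx,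
      integral_mul_eq_of_eq_const_add_primitive 0 hx.2 hf.integrableOn
        fun u hu => by rw [cint_of_le hu.1.le, zero_add],
      integral_mul_eq_of_eq_const_add_primitive (∫ t in x..1, f t) hy.1 hf.integrableOn
        fun u hu => cint_of_lt (hu.2.trans hyx)]
    ring

lemma cint_mul_cint_right (hf : Integrable f) (hf_one : ∫ u in 0..1, f u = 1)
    (hx : x ∈ 𝕀) (hy : y ∈ 𝕀) :
    cint x y (fun u => f u * cint y u f) = cint x y f - cint x y f ^ 2 / 2 := by
  have hadd (r s t : ℝ) : (∫ u in r..s, f u) + ∫ u in s..t, f u = ∫ u in r..t, f u :=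
    intervalIntegral.integral_add_adjacent_intervals hf.intervalIntegrable hf.intervalIntegrable
  rcases le_or_gt x y with hxy | hyx
  · rw [cint_of_le hxy, cint_of_le hxy,
      integral_mul_eq_of_eq_const_add_primitive ((∫ t in y..1, f t) + ∫ t in 0..x, f t) hxy
        hf.integrableOn fun u hu => by rw [cint_of_lt hu.2, ← hadd 0 x u]; ring]
    linear_combination (∫ u in x..y, f u) * (hadd 0 x y + hadd 0 y 1 + hf_one)
  · rw [cint_of_lt hyx, cint_of_lt hyx,
      integral_mul_eq_of_eq_const_add_primitive (∫ t in y..x, f t) hx.2 hf.integrableOn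
        fun u hu => by rw [cint_of_le (hyx.trans hu.1).le, hadd y x u],
      integral_mul_eq_of_eq_const_add_primitive (∫ t in y..1, f t) hy.1 hf.integrableOn
        fun u hu => cint_of_lt hu.2]
    linear_combination (∫ u in x..1, f u) * hadd y x 1
      + ((∫ u in x..1, f u) + ∫ u in 0..y, f u) * (hadd 0 y 1 + hf_one)

lemma cint_mul_cint_add_cint (hf : Integrable f) (hf_one : ∫ u in 0..1, f u = 1)
    (hx : x ∈ 𝕀) (hy : y ∈ 𝕀) :
    cint x y (fun u => f u * (cint x u f + cint y u f)) = cint x y f := by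
  simp only [mul_add]
  rw [cint_add hx hy (integrable_mul_cint hf x).integrableOn
      (integrable_mul_cint hf y).integrableOn,
    cint_mul_cint_left hf hx hy, cint_mul_cint_right hf hf_one hx hy]
  ring

end CintPrimitive

lemma IsClosed.div_one_sub_mem_of_forall_mul_add_mem {A : Set ℝ} (hA : IsClosed A) {ρ r p : ℝ}
    (hρ₀ : 0 ≤ ρ) (hρ₁ : ρ < 1) (hp : p ∈ A) (hstep : ∀ q ∈ A, ρ * q + r ∈ A) :
    r / (1 - ρ) ∈ A := by
  set p₀ := r / (1 - ρ)
  have hfix : ρ * p₀ + r = p₀ := by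
    simp only [p₀]
    field_simp [(sub_pos.2 hρ₁).ne']
    ring
  have hmem (n : ℕ) : p₀ + ρ ^ n * (p - p₀) ∈ A := by
    induction n with
    | zero => simpa using hp
    | succ n ih =>
      convert hstep _ ih using 1
      linear_combination -hfix
  have hlim : Tendsto (fun n : ℕ => p₀ + ρ ^ n * (p - p₀)) atTop (𝓝 p₀) := by
    simpa using ((tendsto_pow_atTop_nhds_zero_of_lt_one hρ₀ hρ₁).mul_const (p - p₀)).const_add p₀
  exact hA.mem_of_tendsto hlim (Eventually.of_forall hmem)

def SolvesCircularEquation (ρ c : ℝ) (π : ℝ → ℝ) (g : ℝ → ℝ → ℝ) : Prop :=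
  ∀ x ∈ 𝕀, ∀ y ∈ 𝕀, g x y = ρ * π y * cint x y (fun u => g x u + g y u)
    + c * π y * cint x y (fun u => ρ * π u + (1 - ρ))

lemma SolvesCircularEquation.congr {ρ c : ℝ} {π π' : ℝ → ℝ} {g : ℝ → ℝ → ℝ}
    (h : SolvesCircularEquation ρ c π g) (hπ : EqOn π π' 𝕀) :
    SolvesCircularEquation ρ c π' g := fun x hx y hy => by
  rw [← hπ hy, cint_congr (g := fun u => ρ * π u + (1 - ρ)) hx hy
    fun u hu => congrArg (ρ * · + (1 - ρ)) (hπ hu).symm]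
  exact h x hx y hy

noncomputable def uniformSolution (ρ c : ℝ) (π : ℝ → ℝ) (x y : ℝ) : ℝ :=
  c / (1 - ρ) * π y * cint x y π

section Deviation

variable {ρ c : ℝ} {π : ℝ → ℝ}

lemma abs_cint_add_le_of_abs_le {e : ℝ → ℝ → ℝ} {p q x y : ℝ} (hπ : Integrable π)
    (hπ_one : ∫ u in 0..1, π u = 1) (he : ∀ x ∈ 𝕀, IntegrableOn (e x) 𝕀)
    (hbound : ∀ x ∈ 𝕀, ∀ u ∈ 𝕀, |e x u| ≤ π u * (p * cint x u π + q))
    (hx : x ∈ 𝕀) (hy : y ∈ 𝕀) :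
    |cint x y (fun u => e x u + e y u)| ≤ (p + 2 * q) * cint x y π := by
  have hint := (integrable_mul_cint_add_cint hπ x y).integrableOn (s := 𝕀)
  have hint' := (hint.const_mul p).add (hπ.integrableOn.const_mul (2 * q))
  calc |cint x y (fun u => e x u + e y u)|
      ≤ cint x y (fun u => p * (π u * (cint x u π + cint y u π)) + 2 * q * π u) :=
        abs_cint_le hx hy ((he x hx).add (he y hy)) hint' fun u hu =>
          (abs_add_le _ _).trans (by linarith [hbound x hx u hu, hbound y hy u hu])
    _ = (p + 2 * q) * cint x y π := by
        rw [cint_add hx hy (hint.const_mul p) (hπ.integrableOn.const_mul _), cint_const_mul,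
          cint_const_mul, cint_mul_cint_add_cint hπ hπ_one hx hy]
        ring

lemma abs_le_of_abs_le_mul_abs_cint_add {e : ℝ → ℝ → ℝ} {M : ℝ} (hρ : ρ ∈ Ioo 0 1)
    (hπ : Integrable π) (hπ_nonneg : ∀ u ∈ 𝕀, 0 ≤ π u) (hπ_one : ∫ u in 0..1, π u = 1)
    (he : ∀ x ∈ 𝕀, IntegrableOn (e x) 𝕀) (he_bdd : ∀ x ∈ 𝕀, ∀ y ∈ 𝕀, |e x y| ≤ M)
    (hrec : ∀ x ∈ 𝕀, ∀ y ∈ 𝕀,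
      |e x y| ≤ π y * (ρ * |cint x y (fun u => e x u + e y u)| + c * (1 - ρ))) :
    ∀ x ∈ 𝕀, ∀ y ∈ 𝕀, |e x y| ≤ π y * (2 * ρ * c * cint x y π + c * (1 - ρ)) := by
  set A := {p : ℝ | ∀ x ∈ 𝕀, ∀ y ∈ 𝕀, |e x y| ≤ π y * (p * cint x y π + c * (1 - ρ))}
  have hA : IsClosed A := by
    simp only [A, ofPred_forall]
    exact isClosed_iInter fun x => isClosed_iInter fun _ => isClosed_iInter fun y =>
      isClosed_iInter fun _ => isClosed_le continuous_const (by fun_prop)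
  have hrec' {x y : ℝ} (hx : x ∈ 𝕀) (hy : y ∈ 𝕀) {X : ℝ}
      (hX : |cint x y (fun u => e x u + e y u)| ≤ X) : |e x y| ≤ π y * (ρ * X + c * (1 - ρ)) :=
    (hrec x hx y hy).trans (by gcongr; exacts [hπ_nonneg y hy, hρ.1.le])
  have hstep (p q : ℝ) (h : ∀ x ∈ 𝕀, ∀ u ∈ 𝕀, |e x u| ≤ π u * (p * cint x u π + q)) :
      ρ * (p + 2 * q) ∈ A := fun x hx y hy =>
    (hrec' hx hy (abs_cint_add_le_of_abs_le hπ hπ_one he h hx hy)).trans_eq (by ring)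
  -- the a priori bound `M` on `e` provides a first admissible slope
  have hinit : ∀ x ∈ 𝕀, ∀ y ∈ 𝕀, |e x y| ≤ π y * (0 * cint x y π + (2 * ρ * M + c * (1 - ρ))) :=
    fun x hx y hy => (hrec' hx hy (abs_cint_le_of_abs_le (M := 2 * M) hx hy
      ((he x hx).add (he y hy)) fun u hu => (abs_add_le _ _).trans
        (by linarith [he_bdd x hx u hu, he_bdd y hy u hu]))).trans_eq (by ring)
  have hfix := hA.div_one_sub_mem_of_forall_mul_add_mem (r := 2 * ρ * c * (1 - ρ)) hρ.1.le hρ.2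
    (hstep _ _ hinit) fun p hp => by
      convert hstep p (c * (1 - ρ)) hp using 1
      ring
  rwa [mul_div_cancel_right₀ _ (sub_pos.2 hρ.2).ne'] at hfix

lemma integrable_uniformSolution (hπ : Integrable π) (x : ℝ) :
    Integrable (uniformSolution ρ c π x) := by
  unfold uniformSolution
  simpa only [mul_assoc] using (integrable_mul_cint hπ x).const_mul (c / (1 - ρ))

lemma sub_uniformSolution_eq {g : ℝ → ℝ → ℝ} {x y : ℝ} (hρ : ρ ≠ 1) (hπ : Integrable π)
    (hπ_one : ∫ u in 0..1, π u = 1) (hg : ∀ x ∈ 𝕀, IntegrableOn (g x) 𝕀)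
    (heq : SolvesCircularEquation ρ c π g)
    (hx : x ∈ 𝕀) (hy : y ∈ 𝕀) :
    g x y - uniformSolution ρ c π x y = π y * (ρ * cint x y (fun u =>
      (g x u - uniformSolution ρ c π x u) + (g y u - uniformSolution ρ c π y u))
      + c * (1 - ρ) * (cint x y (fun _ => 1) - cint x y π)) := by
  set U := uniformSolution ρ c π
  have hint := (integrable_mul_cint_add_cint hπ x y).integrableOn (s := 𝕀)
  have hdev : IntegrableOn (fun u => (g x u - U x u) + (g y u - U y u)) 𝕀 :=
    ((hg x hx).sub (integrable_uniformSolution hπ x).integrableOn).add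
      ((hg y hy).sub (integrable_uniformSolution hπ y).integrableOn)
  have hlin : cint x y (fun u => ρ * π u + (1 - ρ))
      = ρ * cint x y π + (1 - ρ) * cint x y (fun _ => 1) := by
    have hone : IntegrableOn (fun _ : ℝ => (1 : ℝ)) 𝕀 := integrableOn_const measure_Icc_lt_top.ne
    rw [← cint_const_mul, ← cint_const_mul,
      ← cint_add hx hy (hπ.integrableOn.const_mul ρ) (hone.const_mul (1 - ρ))]
    simp only [mul_one]
  have hsplit : cint x y (fun u => g x u + g y u)
      = cint x y (fun u => (g x u - U x u) + (g y u - U y u)) + c / (1 - ρ) * cint x y π := by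
    rw [← cint_mul_cint_add_cint hπ hπ_one hx hy, ← cint_const_mul,
      ← cint_add hx hy hdev (hint.const_mul _)]
    exact cint_congr hx hy fun u _ => by simp only [U, uniformSolution]; ring
  rw [heq x hx y hy, hsplit, hlin]
  generalize cint x y (fun u => (g x u - U x u) + (g y u - U y u)) = D
  simp only [U, uniformSolution]
  field_simp [sub_ne_zero.2 hρ.symm]
  ring

lemma abs_sub_uniformSolution_le_abs_cint {g : ℝ → ℝ → ℝ} {x y : ℝ} (hρ : ρ ∈ Ioo 0 1)
    (hc : 0 ≤ c) (hπ : Integrable π) (hπ_nonneg : ∀ u ∈ 𝕀, 0 ≤ π u)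
    (hπ_one : ∫ u in 0..1, π u = 1) (hg : ∀ x ∈ 𝕀, IntegrableOn (g x) 𝕀)
    (heq : SolvesCircularEquation ρ c π g)
    (hx : x ∈ 𝕀) (hy : y ∈ 𝕀) :
    |g x y - uniformSolution ρ c π x y| ≤ π y * (ρ * |cint x y (fun u =>
      (g x u - uniformSolution ρ c π x u) + (g y u - uniformSolution ρ c π y u))|
        + c * (1 - ρ)) := by
  rw [sub_uniformSolution_eq hρ.2.ne hπ hπ_one hg heq hx hy, abs_mul,
    abs_of_nonneg (hπ_nonneg y hy)]
  set D := cint x y (fun u =>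
    (g x u - uniformSolution ρ c π x u) + (g y u - uniformSolution ρ c π y u))
  have hF := cint_mem_Icc hx hy hπ.integrableOn hπ_nonneg hπ_one
  have hΛ := cint_one_mem_Icc hx hy
  have hΛF : |cint x y (fun _ => 1) - cint x y π| ≤ 1 :=
    abs_sub_le_iff.2 ⟨by linarith [hΛ.2, hF.1], by linarith [hΛ.1, hF.2]⟩
  have hc' : 0 ≤ c * (1 - ρ) := mul_nonneg hc (sub_pos.2 hρ.2).le
  refine mul_le_mul_of_nonneg_left ?_ (hπ_nonneg y hy)
  calc |ρ * D + c * (1 - ρ) * (cint x y (fun _ => 1) - cint x y π)|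
      ≤ ρ * |D| + c * (1 - ρ) * |cint x y (fun _ => 1) - cint x y π| := by
        refine (abs_add_le _ _).trans_eq ?_
        rw [abs_mul, abs_mul, abs_of_pos hρ.1, abs_of_nonneg hc']
    _ ≤ ρ * |D| + c * (1 - ρ) := by nlinarith

theorem abs_sub_uniformSolution_le {g : ℝ → ℝ → ℝ} (hρ : ρ ∈ Ioo 0 1) (hc : 0 ≤ c)
    (hπ : Integrable π) (hπ_nonneg : ∀ u ∈ 𝕀, 0 ≤ π u) (hπ_bdd : ∃ M, ∀ u ∈ 𝕀, π u ≤ M)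
    (hπ_one : ∫ u in 0..1, π u = 1) (hg : ∀ x ∈ 𝕀, IntegrableOn (g x) 𝕀)
    (hg_bdd : ∃ M, ∀ x ∈ 𝕀, ∀ y ∈ 𝕀, |g x y| ≤ M)
    (heq : SolvesCircularEquation ρ c π g) :
    ∀ x ∈ 𝕀, ∀ y ∈ 𝕀, |g x y - uniformSolution ρ c π x y| ≤ (1 + ρ) * π y * c := by
  obtain ⟨Mπ, hMπ⟩ := hπ_bdd
  obtain ⟨Mg, hMg⟩ := hg_bdd
  have hF (x y : ℝ) (hx : x ∈ 𝕀) (hy : y ∈ 𝕀) : cint x y π ∈ 𝕀 :=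
    cint_mem_Icc hx hy hπ.integrableOn hπ_nonneg hπ_one
  have hU_bdd (x y : ℝ) (hx : x ∈ 𝕀) (hy : y ∈ 𝕀) :
      |uniformSolution ρ c π x y| ≤ c / (1 - ρ) * Mπ := by
    have hcρ : 0 ≤ c / (1 - ρ) := div_nonneg hc (sub_pos.2 hρ.2).le
    rw [uniformSolution, abs_mul, abs_mul, abs_of_nonneg hcρ, abs_of_nonneg (hπ_nonneg y hy),
      abs_of_nonneg (hF x y hx hy).1]
    calc c / (1 - ρ) * π y * cint x y π ≤ c / (1 - ρ) * Mπ * 1 :=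
          mul_le_mul (mul_le_mul_of_nonneg_left (hMπ y hy) hcρ) (hF x y hx hy).2
            (hF x y hx hy).1 (mul_nonneg hcρ ((hπ_nonneg y hy).trans (hMπ y hy)))
      _ = _ := mul_one _
  have hbound := abs_le_of_abs_le_mul_abs_cint_add (M := Mg + c / (1 - ρ) * Mπ) hρ hπ hπ_nonneg
    hπ_one (fun x hx => (hg x hx).sub (integrable_uniformSolution hπ x).integrableOn)
    (fun x hx y hy => (abs_sub _ _).trans (add_le_add (hMg x hx y hy) (hU_bdd x y hx hy)))
    (fun x hx y hy => abs_sub_uniformSolution_le_abs_cint hρ hc hπ hπ_nonneg hπ_one hg heq hx hy)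
  intro x hx y hy
  calc |g x y - uniformSolution ρ c π x y|
      ≤ π y * (2 * ρ * c * cint x y π + c * (1 - ρ)) := hbound x hx y hy
    _ ≤ π y * (2 * ρ * c * 1 + c * (1 - ρ)) := by
      gcongr
      exacts [hπ_nonneg y hy, mul_nonneg (mul_nonneg zero_le_two hρ.1.le) hc, (hF x y hx hy).2]
    _ = (1 + ρ) * π y * c := by ring

end Deviation

/-- Any bounded measurable solution `g` of the circular integral equation
`g(x,y) = ρπ(y)·∫*_{u=x}^{y} [g(x,u)+g(y,u)] du + c·π(y)·∫*_{u=x}^{y} [ρπ(u)+1−ρ] du`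
stays within distance `(1+ρ)·π(y)·c` of the transported uniform solution
`(c/(1−ρ))·π(y)·∫*_{u=x}^{y} π(u) du`. -/
theorem solution_close_to_uniform_solution
    (ρ : ℝ) (hρ : ρ ∈ Set.Ioo (0 : ℝ) 1)
    (π : ℝ → ℝ) (hπmeas : Measurable π)
    (hπnn : ∀ x ∈ Set.Icc (0 : ℝ) 1, 0 ≤ π x)
    (hπbd : ∃ M : ℝ, ∀ x ∈ Set.Icc (0 : ℝ) 1, π x ≤ M)
    (hπint : (∫ u in (0 : ℝ)..1, π u) = 1)
    (c : ℝ) (hc : 0 ≤ c)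
    (g : ℝ → ℝ → ℝ)
    (hgmeas : Measurable (Function.uncurry g))
    (hgbd : ∃ M : ℝ, ∀ x ∈ Set.Icc (0 : ℝ) 1, ∀ y ∈ Set.Icc (0 : ℝ) 1, |g x y| ≤ M)
    (heq : ∀ x ∈ Set.Icc (0 : ℝ) 1, ∀ y ∈ Set.Icc (0 : ℝ) 1,
      g x y = ρ * π y * cint x y (fun u => g x u + g y u)
        + c * π y * cint x y (fun u => ρ * π u + (1 - ρ))) :
    ∀ x ∈ Set.Icc (0 : ℝ) 1, ∀ y ∈ Set.Icc (0 : ℝ) 1,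
      |g x y - c / (1 - ρ) * π y * cint x y π| ≤ (1 + ρ) * π y * c := by
  obtain ⟨Mπ, hMπ⟩ := hπbd
  obtain ⟨Mg, hMg⟩ := hgbd
  -- only the values of `π` on `[0,1]` enter, so we may assume `π` vanishes outside
  set π₀ := indicator 𝕀 π
  have hπ₀ : EqOn π₀ π 𝕀 := fun u hu => indicator_of_mem hu π
  have hπ₀_int : Integrable π₀ := (integrable_indicator_iff measurableSet_Icc).2
    (integrableOn_Icc_of_abs_le hπmeas fun u hu => (abs_of_nonneg (hπnn u hu)).trans_le (hMπ u hu))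
  have hπ₀_one : ∫ u in 0..1, π₀ u = 1 := (intervalIntegral.integral_congr fun u hu =>
    hπ₀ (by rwa [uIcc_of_le zero_le_one] at hu)).trans hπint
  have hg (x : ℝ) (hx : x ∈ 𝕀) : IntegrableOn (g x) 𝕀 :=
    integrableOn_Icc_of_abs_le (hgmeas.comp measurable_prodMk_left) (hMg x hx)
  have key := abs_sub_uniformSolution_le hρ hc hπ₀_int (fun u hu => hπ₀ hu ▸ hπnn u hu)
    ⟨Mπ, fun u hu => hπ₀ hu ▸ hMπ u hu⟩ hπ₀_one hg ⟨Mg, hMg⟩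
    (SolvesCircularEquation.congr heq hπ₀.symm)
  intro x hx y hy
  simpa only [uniformSolution, hπ₀ hy, cint_congr hx hy hπ₀] using key x hx y hy
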